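/- Under the same genericity assumptions as for the hyperbolic Cauchy matrix, the determinant of the N×N matrix C with entries C_{kj} = 1/(sinh(ξ_k − λ_j) sinh(ξ_k + λ_j + η)) equals ∏_{a<b} [sinh(ξ_a − ξ_b) sinh(ξ_a + ξ_b + η) sinh(λ_b − λ_a) sinh(λ_a + λ_b + η)] / ∏_{a,b=1}^N [sinh(ξ_a − λ_b) sinh(ξ_a + λ_b + η)]. -/

import Mathlib

/-!
The product formula `sinh (p - q) * sinh (p + q + η) = x p - x q` with
`x p = cosh (2 * p + η) / 2` turns every entry of the matrix, and every factor of the right-hand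
side, into a difference, so the claim becomes Cauchy's determinant formula for the points
`x ξ_a` and `x λ_b`. That formula is proved by induction on the size, eliminating the first column.
-/

open Complex Finset

section Cauchy

variable {K : Type*} [Field K]

def cauchyMatrix {m n : Type*} (x : m → K) (y : n → K) : Matrix m n K :=
  Matrix.of fun i j => (x i - y j)⁻¹

lemma inv_sub_sub_div_mul_inv_sub {a b c d : K} (had : a ≠ d) (hac : a ≠ c) (hbd : b ≠ d) :
    (a - d)⁻¹ - (b - c) / (a - c) * (b - d)⁻¹
      = (b - a) / (a - c) * ((d - c) / (b - d) * (a - d)⁻¹) := by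
  have := sub_ne_zero.2 had
  have := sub_ne_zero.2 hac
  have := sub_ne_zero.2 hbd
  field_simp
  ring

/-- Subtracting from each row `i ≠ 0` the multiple `(x 0 - y 0) / (x i - y 0)` of row `0` clears
column `0` below the diagonal and leaves a rescaled Cauchy matrix in the remaining block. -/
lemma det_cauchyMatrix_succ {n : ℕ} (x y : Fin (n + 1) → K) (h : ∀ i j, x i ≠ y j) :
    (cauchyMatrix x y).det
      = (x 0 - y 0)⁻¹ * (∏ i : Fin n, (x 0 - x i.succ) / (x i.succ - y 0))
        * (∏ j : Fin n, (y j.succ - y 0) / (x 0 - y j.succ))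
        * (cauchyMatrix (Fin.tail x) (Fin.tail y)).det := by
  set c : Fin (n + 1) → K := Fin.cons 0 fun i => (x 0 - y 0) / (x i.succ - y 0)
  set g : Fin (n + 1) → K := fun j => (y j - y 0) / (x 0 - y j)
  set B : Matrix (Fin (n + 1)) (Fin (n + 1)) K :=
    Matrix.of fun i j => cauchyMatrix x y i j - c i * cauchyMatrix x y 0 j
  have hB_zero (j) : B 0 j = (x 0 - y j)⁻¹ := by simp [B, c, cauchyMatrix]
  have hB_succ (i : Fin n) (j) :
      B i.succ j = (x 0 - x i.succ) / (x i.succ - y 0) * (g j * (x i.succ - y j)⁻¹) := by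
    simpa [B, c, g, cauchyMatrix] using inv_sub_sub_div_mul_inv_sub (h _ j) (h _ 0) (h 0 j)
  have hAB : (cauchyMatrix x y).det = B.det :=
    Matrix.det_eq_of_forall_row_eq_smul_add_const c 0 rfl fun i j => by
      rw [hB_zero]; simp [B, cauchyMatrix]
  have hB : B.det = (x 0 - y 0)⁻¹ * (B.submatrix Fin.succ Fin.succ).det := by
    rw [Matrix.det_succ_column_zero, Fin.sum_univ_succ]
    simp [hB_zero, hB_succ, g]
  have hsub : B.submatrix Fin.succ Fin.succ = Matrix.of fun i j =>
      (x 0 - x i.succ) / (x i.succ - y 0) * Matrix.of (fun i j =>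
        (y j.succ - y 0) / (x 0 - y j.succ) * cauchyMatrix (Fin.tail x) (Fin.tail y) i j) i j := by
    ext i j
    simp [hB_succ, g, cauchyMatrix, Fin.tail]
  rw [hAB, hB, hsub, Matrix.det_mul_column, Matrix.det_mul_row]
  ring

theorem det_cauchyMatrix {n : ℕ} (x y : Fin n → K) (h : ∀ i j, x i ≠ y j) :
    (cauchyMatrix x y).det
      = (∏ i, ∏ j ∈ Ioi i, (x i - x j) * (y j - y i)) / ∏ i, ∏ j, (x i - y j) := by
  induction n with
  | zero => simp
  | succ n ih =>
    rw [det_cauchyMatrix_succ x y h, ih (Fin.tail x) (Fin.tail y) fun i j => h _ _]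
    simp only [Fin.prod_univ_succ, Fin.prod_Ioi_zero, Fin.prod_Ioi_succ, Fin.tail,
      div_eq_mul_inv, prod_mul_distrib, prod_inv_distrib, mul_inv]
    ring

end Cauchy

lemma Complex.sinh_mul_sinh (u v : ℂ) : sinh u * sinh v = (cosh (u + v) - cosh (u - v)) / 2 := by
  rw [cosh_add, cosh_sub]
  ring

lemma Complex.sinh_sub_mul_sinh_add_add (p q η : ℂ) :
    sinh (p - q) * sinh (p + q + η) = cosh (2 * p + η) / 2 - cosh (2 * q + η) / 2 := by
  rw [sinh_mul_sinh, ← cosh_neg (p - q - (p + q + η))]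
  ring_nf

/-- Determinant of the hyperbolic Cauchy matrix
`C_{kj} = 1/(sinh(ξ_k − λ_j) sinh(ξ_k + λ_j + η))`. -/
theorem stmt6 (N : ℕ) (η : ℂ) (ξ lam : Fin N → ℂ)
    (h1 : ∀ a b, Complex.sinh (ξ a - lam b) ≠ 0)
    (h2 : ∀ a b, Complex.sinh (ξ a + lam b + η) ≠ 0) :
    Matrix.det (Matrix.of fun k j : Fin N =>
        1 / (Complex.sinh (ξ k - lam j) * Complex.sinh (ξ k + lam j + η)))
      = (∏ a : Fin N, ∏ b ∈ Finset.univ.filter (fun b => a < b),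
            (Complex.sinh (ξ a - ξ b) * Complex.sinh (ξ a + ξ b + η) *
             Complex.sinh (lam b - lam a) * Complex.sinh (lam a + lam b + η)))
        / ∏ a : Fin N, ∏ b : Fin N,
            (Complex.sinh (ξ a - lam b) * Complex.sinh (ξ a + lam b + η)) := by
  set x : Fin N → ℂ := fun a => cosh (2 * ξ a + η) / 2
  set y : Fin N → ℂ := fun b => cosh (2 * lam b + η) / 2
  have hξlam (a b) : sinh (ξ a - lam b) * sinh (ξ a + lam b + η) = x a - y b :=
    sinh_sub_mul_sinh_add_add _ _ _
  have hξξ_lamlam (a b) : sinh (ξ a - ξ b) * sinh (ξ a + ξ b + η) *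
      sinh (lam b - lam a) * sinh (lam a + lam b + η) = (x a - x b) * (y b - y a) := by
    rw [add_comm (lam a), mul_assoc, ← sinh_sub_mul_sinh_add_add, ← sinh_sub_mul_sinh_add_add]
  have hxy (a b) : x a ≠ y b :=
    sub_ne_zero.1 (hξlam a b ▸ mul_ne_zero (h1 a b) (h2 a b))
  have hC : (Matrix.of fun k j : Fin N => 1 / (sinh (ξ k - lam j) * sinh (ξ k + lam j + η)))
      = cauchyMatrix x y := by
    ext k j
    simp [cauchyMatrix, hξlam]
  rw [hC, det_cauchyMatrix x y hxy]
  simp only [hξlam, hξξ_lamlam, filter_lt_eq_Ioi]
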